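/- arXiv:1112.5942 — 4 statements merged into one kernel-verified Lean document; each statement's English description precedes it below -/
import Mathlib

section
/- If X₁, …, X_{n+1} are compact subsets of ℝⁿ and the origin 0 lies in conv X_i for every i, then there exist points x_i ∈ X_i (i = 1, …, n+1) and nonnegative coefficients t_i summing to 1 such that 0 = t₁x₁ + ⋯ + t_{n+1}x_{n+1}. Equivalently, 0 ∈ X₁ * X₂ * ⋯ * X_{n+1}, the geometric join. -/
/-!
Bárány's argument. Reduce to finite `X i` and choose a transversal `x` minimising the distance
from `0` to `conv (range x)`. If that distance is positive, let `p` be the nearest point. Every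
`x i` then satisfies `‖p‖² ≤ ⟪p, x i⟫`, so `p` lies in the convex hull of affinely independent
points on the hyperplane `⟪p, ·⟫ = ‖p‖²`. There are at most `n` of them, so some colour `j` is not
needed. Since `0 ∈ conv (X j)`, some `y ∈ X j` has `⟪p, y⟫ ≤ 0`, and putting `y` in place of
`x j` brings the hull strictly closer to `0`.
-/

open Finset
open scoped RealInnerProductSpace

open Set in
theorem convexHull_range_eq_image_stdSimplex {ι E : Type*} [Fintype ι] [AddCommGroup E]
    [Module ℝ E] (x : ι → E) :
    convexHull ℝ (range x) = (fun t : ι → ℝ => ∑ i, t i • x i) '' stdSimplex ℝ ι := by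
  classical
  have hL : (fun t : ι → ℝ => ∑ i, t i • x i) = Fintype.linearCombination ℝ x :=
    funext fun t => (Fintype.linearCombination_apply ℝ x t).symm
  rw [hL, ← convexHull_basis_eq_stdSimplex, LinearMap.image_convexHull, ← range_comp]
  congr 2
  ext i
  simp [Fintype.linearCombination_apply, ite_smul]

theorem exists_apply_nonpos_of_zero_mem_convexHull {E : Type*} [AddCommGroup E] [Module ℝ E]
    {S : Set E} (h : 0 ∈ convexHull ℝ S) (f : E →ₗ[ℝ] ℝ) : ∃ y ∈ S, f y ≤ 0 := by
  by_contra! hpos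
  have h0 : 0 < f 0 := convexHull_min hpos (convex_halfSpace_gt f.isLinear 0) h
  simp at h0

section InnerProductSpace

variable {E : Type*} [NormedAddCommGroup E] [InnerProductSpace ℝ E]

open Metric Module

theorem IsMinOn.norm_sq_le_inner {K : Set E} {p w : E} (hK : Convex ℝ K) (hp : p ∈ K)
    (hmin : IsMinOn norm K p) (hw : w ∈ K) : ‖p‖ ^ 2 ≤ ⟪p, w⟫ := by
  have : Nonempty K := ⟨⟨p, hp⟩⟩
  have hinf : ‖0 - p‖ = ⨅ v : K, ‖0 - (v : E)‖ := by
    refine le_antisymm (le_ciInf fun v => ?_)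
      (ciInf_le (f := fun v : K => ‖0 - (v : E)‖) ⟨0, ?_⟩ ⟨p, hp⟩)
    · simpa using hmin v.2
    · rintro _ ⟨v, rfl⟩
      positivity
  have := (norm_eq_iInf_iff_real_inner_le_zero hK hp).1 hinf w hw
  rw [zero_sub, inner_neg_left, inner_sub_right, real_inner_self_eq_norm_sq] at this
  linarith

theorem AffineIndependent.card_le_finrank_of_inner_eq [FiniteDimensional ℝ E] {ι : Type*}
    [Fintype ι] {z : ι → E} (hz : AffineIndependent ℝ z) {p : E} (hp : p ≠ 0) {c : ℝ}
    (hc : ∀ i, ⟪p, z i⟫ = c) : Fintype.card ι ≤ finrank ℝ E := by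
  have hspan : vectorSpan ℝ (Set.range z) ≤ (ℝ ∙ p)ᗮ := by
    rw [vectorSpan_def, Submodule.span_le]
    rintro _ ⟨_, ⟨i, rfl⟩, _, ⟨j, rfl⟩, rfl⟩
    simp [Submodule.mem_orthogonal_singleton_iff_inner_right, inner_sub_right, hc]
  have hrank := (ℝ ∙ p).finrank_add_finrank_orthogonal
  rw [finrank_span_singleton hp] at hrank
  have := Submodule.finrank_mono hspan
  have := hz.card_le_finrank_succ
  omega

theorem exists_card_le_finrank_mem_convexHull_image [FiniteDimensional ℝ E] {ι : Type*}
    (x : ι → E) {p : E} (hp0 : p ≠ 0) (hp : p ∈ convexHull ℝ (Set.range x))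
    (hsupp : ∀ i, ‖p‖ ^ 2 ≤ ⟪p, x i⟫) :
    ∃ s : Finset ι, #s ≤ finrank ℝ E ∧ p ∈ convexHull ℝ (x '' s) := by
  classical
  obtain ⟨κ, _, z, w, hzx, hz, hw0, hw1, hwz⟩ := eq_pos_convex_span_of_mem_convexHull hp
  choose g hg using fun k => hzx ⟨k, rfl⟩
  have hface : ∀ k, ⟪p, z k⟫ = ‖p‖ ^ 2 := by
    have hle : ∀ k ∈ univ, w k * ‖p‖ ^ 2 ≤ w k * ⟪p, z k⟫ := fun k _ =>
      mul_le_mul_of_nonneg_left (hg k ▸ hsupp (g k)) (hw0 k).le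
    have heq : ∑ k, w k * ‖p‖ ^ 2 = ∑ k, w k * ⟪p, z k⟫ := by
      simp_rw [← real_inner_smul_right, ← inner_sum, hwz, ← sum_mul, hw1, one_mul,
        real_inner_self_eq_norm_sq]
    exact fun k => (mul_left_cancel₀ (hw0 k).ne' ((sum_eq_sum_iff_of_le hle).1 heq k
      (mem_univ k))).symm
  refine ⟨univ.image g, card_image_le.trans (hz.card_le_finrank_of_inner_eq hp0 hface), ?_⟩
  have hrange : x '' ↑(univ.image g) = Set.range z := by
    ext
    simp [hg]
  rw [hrange]
  exact mem_convexHull_of_exists_fintype w z (fun k => (hw0 k).le) hw1 Set.mem_range_self hwz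

theorem exists_update_infDist_lt [FiniteDimensional ℝ E] {ι : Type*} [Fintype ι] [DecidableEq ι]
    (hcard : finrank ℝ E < Fintype.card ι) (x : ι → E) (hx : 0 ∉ convexHull ℝ (Set.range x)) :
    ∃ (p : E) (j : ι), ∀ y, ⟪p, y⟫ ≤ 0 →
      infDist 0 (convexHull ℝ (Set.range (Function.update x j y))) <
        infDist 0 (convexHull ℝ (Set.range x)) := by
  set K := convexHull ℝ (Set.range x)
  have : Nonempty ι := Fintype.card_pos_iff.1 (by omega)
  obtain ⟨p, hpK, hpdist⟩ :=
    ((Set.finite_range x).isCompact_convexHull (𝕜 := ℝ)).exists_infDist_eq_dist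
      (Set.range_nonempty x).convexHull 0
  rw [dist_zero_left] at hpdist
  have hp0 : p ≠ 0 := by
    rintro rfl
    exact hx hpK
  have hmin : IsMinOn norm K p := fun w hw => by
    simpa [← hpdist] using infDist_le_dist_of_mem (x := 0) hw
  obtain ⟨s, hs, hps⟩ := exists_card_le_finrank_mem_convexHull_image x hp0 hpK fun i =>
    hmin.norm_sq_le_inner (convex_convexHull ℝ _) hpK (subset_convexHull ℝ _ ⟨i, rfl⟩)
  obtain ⟨j, -, hj⟩ := exists_mem_notMem_of_card_lt_card (s := s) (t := univ)
    (by rw [card_univ]; omega)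
  refine ⟨p, j, fun y hy => ?_⟩
  set K' := convexHull ℝ (Set.range (Function.update x j y))
  have hpK' : p ∈ K' := by
    refine convexHull_mono ?_ hps
    rintro _ ⟨i, hi, rfl⟩
    exact ⟨i, Function.update_of_ne (ne_of_mem_of_not_mem hi hj) _ _⟩
  have hyK' : y ∈ K' := subset_convexHull ℝ _ ⟨j, Function.update_self _ _ _⟩
  by_contra! hle
  -- Otherwise `p` would also be a nearest point of `K' ∋ y`, forcing `‖p‖² ≤ ⟪p, y⟫ ≤ 0`.
  have hmin' : IsMinOn norm K' p := fun w hw => by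
    simpa [← hpdist] using hle.trans (infDist_le_dist_of_mem (x := 0) hw)
  have := hmin'.norm_sq_le_inner (convex_convexHull ℝ _) hpK' hyK'
  have : 0 < ‖p‖ := norm_pos_iff.2 hp0
  nlinarith

theorem exists_transversal_zero_mem_convexHull [FiniteDimensional ℝ E] {ι : Type*} [Fintype ι]
    (hcard : finrank ℝ E < Fintype.card ι) (X : ι → Set E)
    (hX : ∀ i, 0 ∈ convexHull ℝ (X i)) :
    ∃ x : ι → E, (∀ i, x i ∈ X i) ∧ 0 ∈ convexHull ℝ (Set.range x) := by
  classical
  have hfin : ∀ i, ∃ Y : Finset E, ↑Y ⊆ X i ∧ 0 ∈ convexHull ℝ (Y : Set E) := fun i => by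
    simpa [convexHull_eq_union_convexHull_finite_subsets (X i)] using hX i
  choose Y hYX hY using hfin
  have hT : (Fintype.piFinset Y).Nonempty := Fintype.piFinset_nonempty.2 fun i =>
    Finset.coe_nonempty.1 (convexHull_nonempty_iff.1 ⟨0, hY i⟩)
  obtain ⟨x, hxT, hmin⟩ :=
    (Fintype.piFinset Y).exists_min_image (fun x => infDist 0 (convexHull ℝ (Set.range x))) hT
  rw [Fintype.mem_piFinset] at hxT
  refine ⟨x, fun i => hYX i (hxT i), ?_⟩
  by_contra hx
  obtain ⟨p, j, hlt⟩ := exists_update_infDist_lt hcard x hx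
  obtain ⟨y, hyY, hy⟩ := exists_apply_nonpos_of_zero_mem_convexHull (hY j) (innerₛₗ ℝ p)
  have hxT' : Function.update x j y ∈ Fintype.piFinset Y := by
    rw [Fintype.mem_piFinset]
    intro i
    rcases eq_or_ne i j with rfl | hij
    · simpa using hyY
    · simpa [hij] using hxT i
  exact (hlt y hy).not_ge (hmin _ hxT')

end InnerProductSpace

theorem colorful_caratheodory_general {n : ℕ} (X : Fin (n + 1) → Set (EuclideanSpace ℝ (Fin n)))
    (h0 : ∀ i, (0 : EuclideanSpace ℝ (Fin n)) ∈ convexHull ℝ (X i)) :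
    ∃ (x : Fin (n + 1) → EuclideanSpace ℝ (Fin n)) (t : Fin (n + 1) → ℝ),
      (∀ i, x i ∈ X i) ∧ (∀ i, 0 ≤ t i) ∧ ∑ i, t i = 1 ∧
      ∑ i, t i • x i = (0 : EuclideanSpace ℝ (Fin n)) := by
  obtain ⟨x, hxX, hx0⟩ := exists_transversal_zero_mem_convexHull (by simp) X h0
  rw [convexHull_range_eq_image_stdSimplex] at hx0
  obtain ⟨t, ⟨ht0, ht1⟩, hsum⟩ := hx0
  exact ⟨x, t, hxX, ht0, ht1, hsum⟩

/-- Colorful Carathéodory theorem (Bárány 1982): if `0 ∈ conv (X i)` for `n+1` compacta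
in `ℝⁿ`, then `0` is a convex combination of a system of representatives of the `X i`. -/
theorem colorful_caratheodory {n : ℕ} (X : Fin (n + 1) → Set (EuclideanSpace ℝ (Fin n)))
    (hcpt : ∀ i, IsCompact (X i)) (h0 : ∀ i, (0 : EuclideanSpace ℝ (Fin n)) ∈ convexHull ℝ (X i)) :
    ∃ (x : Fin (n + 1) → EuclideanSpace ℝ (Fin n)) (t : Fin (n + 1) → ℝ),
      (∀ i, x i ∈ X i) ∧ (∀ i, 0 ≤ t i) ∧ ∑ i, t i = 1 ∧
      ∑ i, t i • x i = (0 : EuclideanSpace ℝ (Fin n)) :=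
  colorful_caratheodory_general X h0
end

section
/- Let 𝓕 be a finite family of convex compact sets in ℝⁿ such that the union of every subfamily of 𝓕 is (n−k)-convex (its image under every linear map ℝⁿ → ℝ^{n−k} is convex). Then the Carathéodory number of 𝓕 is at most k+1. -/
open Finset

/-!
Write `x = ∑ i, w i • y i` as a convex combination with `y i ∈ A i`. These representations form a
compact set, so one may choose a representation and an index set `T` with `#T ≤ k + 1`
maximizing the mass `∑ i ∈ T, w i`. If the mass is `1`, then `x` lies in the hull of
`⋃ i ∈ T, A i`. Otherwise `T` has `k + 1` elements of positive weight and the points `y i`,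
`i ∈ T`, are affinely independent, so their direction space `V` has dimension `k` and is the
kernel of a linear map `f` to an `(n - k)`-dimensional space. Convexity of `f '' ⋃ i, A i` gives
`z ∈ A j` with `z - x ∈ V`, and transferring weight from the `y i`, `i ∈ T`, to `z` increases the
mass, a contradiction.
-/

/-- `CaraBound F κ`: for every subfamily `G ⊆ F`, the convex hull of `⋃ G` is covered by
the convex hulls of unions of subfamilies of `G` of size at most `κ`. -/
def CaraBound {n : ℕ} (F : Finset (Set (EuclideanSpace ℝ (Fin n)))) (κ : ℕ) : Prop :=
  ∀ G ⊆ F, convexHull ℝ (⋃ S ∈ G, S) =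
    {x | ∃ H ⊆ G, H.card ≤ κ ∧ x ∈ convexHull ℝ (⋃ S ∈ H, S)}

/-- The Carathéodory number `κ(F)` of a family of convex compacta: the least `κ`
satisfying `CaraBound F κ`. -/
noncomputable def caraNumber {n : ℕ} (F : Finset (Set (EuclideanSpace ℝ (Fin n)))) : ℕ :=
  sInf {κ | CaraBound F κ}

theorem Submodule.exists_linearMap_ker_eq {K V W : Type*} [Field K] [AddCommGroup V] [Module K V]
    [FiniteDimensional K V] [AddCommGroup W] [Module K W] [FiniteDimensional K W]
    (p : Submodule K V) (h : Module.finrank K W = Module.finrank K V - Module.finrank K p) :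
    ∃ f : V →ₗ[K] W, LinearMap.ker f = p := by
  obtain ⟨e⟩ := FiniteDimensional.nonempty_linearEquiv_of_finrank_eq (R := K) (M := V ⧸ p)
    (M' := W) (by rw [p.finrank_quotient, h])
  exact ⟨e.toLinearMap ∘ₗ p.mkQ, by rw [LinearEquiv.ker_comp, Submodule.ker_mkQ]⟩

theorem IsCompact.exists_forall_le_of_finset {X α : Type*} [TopologicalSpace X] {K : Set X}
    (hK : IsCompact K) (hne : K.Nonempty) {s : Finset α} (hs : s.Nonempty) {f : α → X → ℝ}
    (hf : ∀ a, Continuous (f a)) : ∃ x ∈ K, ∃ a ∈ s, ∀ y ∈ K, ∀ b ∈ s, f b y ≤ f a x := by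
  choose g hgK hg using fun a => hK.exists_isMaxOn hne (hf a).continuousOn
  obtain ⟨a, ha, hmax⟩ := s.exists_max_image (fun a => f a (g a)) hs
  exact ⟨g a, hgK a, a, ha, fun y hy b hb => (hg b hy).trans (hmax b hb)⟩

theorem Finset.exists_maximal_pos_mul_le {ι : Type*} {T : Finset ι} {w d : ι → ℝ}
    (hw : ∀ i ∈ T, 0 < w i) (hd : ∃ i ∈ T, 0 < d i) :
    ∃ t > 0, (∀ i ∈ T, t * d i ≤ w i) ∧ ∃ i ∈ T, t * d i = w i := by
  obtain ⟨i₁, hi₁, hmin⟩ := (T.filter (0 < d ·)).exists_min_image (fun i => w i / d i)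
    (by simpa [Finset.Nonempty] using hd)
  rw [mem_filter] at hi₁
  refine ⟨w i₁ / d i₁, div_pos (hw i₁ hi₁.1) hi₁.2, fun i hi => ?_, i₁, hi₁.1,
    div_mul_cancel₀ _ hi₁.2.ne'⟩
  rcases le_or_gt (d i) 0 with hdi | hdi
  · exact (mul_nonpos_of_nonneg_of_nonpos (div_pos (hw i₁ hi₁.1) hi₁.2).le hdi).trans
      (hw i hi).le
  · exact (le_div_iff₀ hdi).1 (hmin i (mem_filter.2 ⟨hi, hdi⟩))

section ConvexRep

variable {E ι : Type*} [AddCommGroup E] [Module ℝ E] [Fintype ι]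

structure IsConvexRep (A : ι → Set E) (x : E) (y : ι → E) (w : ι → ℝ) : Prop where
  mem : ∀ i, y i ∈ A i
  nonneg : ∀ i, 0 ≤ w i
  sum_eq_one : ∑ i, w i = 1
  sum_smul_eq : ∑ i, w i • y i = x

variable {A : ι → Set E} {x : E} {y : ι → E} {w : ι → ℝ}

theorem exists_isConvexRep_add_single [DecidableEq ι] {j : ι} (hA : Convex ℝ (A j))
    (hy : ∀ i, y i ∈ A i) {z : E} (hz : z ∈ A j) (hw : ∀ i, 0 ≤ w i) {t : ℝ} (ht : 0 ≤ t)
    (hsum : ∑ i, w i + t = 1) (hx : ∑ i, w i • y i + t • z = x) :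
    ∃ y', IsConvexRep A x y' (w + Pi.single j t) := by
  obtain ⟨u, hu, hu'⟩ := hA.exists_mem_add_smul_eq (hy j) hz (hw j) ht
  have hterm : ∀ i, (w + Pi.single j t : ι → ℝ) i • Function.update y j u i =
      w i • y i + (Pi.single j (t • z) : ι → E) i := by
    intro i
    rcases eq_or_ne i j with rfl | hij
    · simpa using hu'
    · simp [hij]
  refine ⟨Function.update y j u, fun i => ?_, fun i => ?_, ?_, ?_⟩
  · rcases eq_or_ne i j with rfl | hij
    · simpa using hu
    · simpa [hij] using hy i
  · rcases eq_or_ne i j with rfl | hij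
    · simpa using add_nonneg (hw i) ht
    · simpa [hij] using hw i
  · simp [sum_add_distrib, hsum]
  · rw [sum_congr rfl fun i _ => hterm i, sum_add_distrib]
    simpa using hx

theorem exists_isConvexRep_of_mem_convexHull (hA : ∀ i, Convex ℝ (A i))
    (hAne : ∀ i, (A i).Nonempty) (hx : x ∈ convexHull ℝ (⋃ i, A i)) :
    ∃ y w, IsConvexRep A x y w := by
  classical
  refine (convexHull_min (Set.iUnion_subset fun j z hz => ?_) ?_ :
    convexHull ℝ (⋃ i, A i) ⊆ {x | ∃ y w, IsConvexRep A x y w}) hx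
  · choose y₀ hy₀ using hAne
    obtain ⟨y, hy⟩ := exists_isConvexRep_add_single (x := z) (w := 0) (hA j) hy₀ hz
      (fun _ => le_rfl) zero_le_one (by simp) (by simp)
    exact ⟨y, _, hy⟩
  · rintro _ ⟨y, w, h⟩ _ ⟨y', w', h'⟩ a b ha hb hab
    choose u hu hu' using fun i => (hA i).exists_mem_add_smul_eq (h.mem i) (h'.mem i)
      (mul_nonneg ha (h.nonneg i)) (mul_nonneg hb (h'.nonneg i))
    refine ⟨u, fun i => a * w i + b * w' i, ⟨hu, fun i => ?_, ?_, ?_⟩⟩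
    · exact add_nonneg (mul_nonneg ha (h.nonneg i)) (mul_nonneg hb (h'.nonneg i))
    · simp [sum_add_distrib, ← mul_sum, h.sum_eq_one, h'.sum_eq_one, hab]
    · simp only [hu', sum_add_distrib, mul_smul, ← smul_sum, h.sum_smul_eq,
        h'.sum_smul_eq]

theorem IsConvexRep.sum_le_one (h : IsConvexRep A x y w) (T : Finset ι) : ∑ i ∈ T, w i ≤ 1 :=
  h.sum_eq_one ▸ sum_le_univ_sum_of_nonneg h.nonneg

theorem IsConvexRep.mem_convexHull_of_sum_eq_one (h : IsConvexRep A x y w) {T : Finset ι}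
    (hT : ∑ i ∈ T, w i = 1) : x ∈ convexHull ℝ (⋃ i ∈ T, A i) := by
  classical
  have hoff : ∀ i ∈ Tᶜ, w i = 0 := by
    refine (sum_eq_zero_iff_of_nonneg fun i _ => h.nonneg i).1 ?_
    linarith [sum_add_sum_compl T w, h.sum_eq_one]
  rw [← h.sum_smul_eq, ← sum_subset (subset_univ T) fun i _ hi =>
    by rw [hoff i (mem_compl.2 hi), zero_smul]]
  exact (convex_convexHull ℝ _).sum_mem (fun i _ => h.nonneg i) hT
    fun i hi => subset_convexHull ℝ _ (Set.mem_biUnion hi (h.mem i))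

theorem isCompact_setOf_isConvexRep [TopologicalSpace E] [ContinuousAdd E] [ContinuousSMul ℝ E]
    [T2Space E] (hA : ∀ i, IsCompact (A i)) :
    IsCompact {p : (ι → E) × (ι → ℝ) | IsConvexRep A x p.1 p.2} := by
  have hclosed : IsClosed {p : (ι → E) × (ι → ℝ) | IsConvexRep A x p.1 p.2} := by
    have : {p : (ι → E) × (ι → ℝ) | IsConvexRep A x p.1 p.2} =
        (⋂ i, (fun p : (ι → E) × (ι → ℝ) => p.1 i) ⁻¹' A i) ∩
        (⋂ i, {p | 0 ≤ p.2 i}) ∩ {p | ∑ i, p.2 i = 1} ∩ {p | ∑ i, p.2 i • p.1 i = x} := by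
      ext p
      simp only [Set.mem_inter_iff, Set.mem_iInter, Set.mem_preimage]
      exact ⟨fun h => ⟨⟨⟨h.1, h.2⟩, h.3⟩, h.4⟩, fun h => ⟨h.1.1.1, h.1.1.2, h.1.2, h.2⟩⟩
    rw [this]
    refine (((isClosed_iInter fun i => (hA i).isClosed.preimage (by fun_prop)).inter
      (isClosed_iInter fun i => isClosed_le continuous_const (by fun_prop))).inter
      (isClosed_eq (by fun_prop) continuous_const)).inter (isClosed_eq (by fun_prop)
      continuous_const)
  refine ((isCompact_univ_pi hA).prod (isCompact_univ_pi fun _ => isCompact_Icc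
    (a := (0 : ℝ)) (b := 1))).of_isClosed_subset hclosed fun p h => ⟨fun i _ => h.mem i,
    fun i _ => ⟨h.nonneg i, ?_⟩⟩
  simpa using h.sum_le_one {i}

structure MaximizesMass (A : ι → Set E) (x : E) (k : ℕ) (y : ι → E) (w : ι → ℝ)
    (T : Finset ι) : Prop where
  rep : IsConvexRep A x y w
  card_le : #T ≤ k + 1
  sum_le : ∀ y' w', IsConvexRep A x y' w' → ∀ T' : Finset ι, #T' ≤ k + 1 →
    ∑ i ∈ T', w' i ≤ ∑ i ∈ T, w i

end ConvexRep

section MaximizesMass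

variable {E ι : Type*} [AddCommGroup E] [Module ℝ E] [Fintype ι] [DecidableEq ι]
  {A : ι → Set E} {x : E} {k : ℕ} {y : ι → E} {w : ι → ℝ} {T : Finset ι}

theorem exists_affineRelation_of_mem_supported {i₀ : ι} (hi₀ : i₀ ∈ T)
    (y : ι → E) {l : ι →₀ ℝ} (hl : l ∈ Finsupp.supported ℝ ℝ ↑(T.erase i₀)) :
    ∃ c : ι → ℝ, (∀ i ∉ T, c i = 0) ∧ ∑ i, c i = 0 ∧
      ∑ i, c i • y i = Finsupp.linearCombination ℝ (fun i => y i - y i₀) l ∧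
      ∀ i ≠ i₀, c i = l i := by
  refine ⟨⇑l - Pi.single i₀ (∑ i, l i), fun i hi => ?_, by simp, ?_, fun i hi => by simp [hi]⟩
  · have hli : l i = 0 := Finsupp.notMem_support_iff.1 fun h => hi (mem_of_mem_erase (hl h))
    simp [hli, show i ≠ i₀ by rintro rfl; exact hi hi₀]
  · simp [Finsupp.linearCombination_apply, Finsupp.sum_fintype, sub_smul, smul_sub,
      sum_sub_distrib, sum_smul]

theorem MaximizesMass.exists_pos_notMem (h : MaximizesMass A x k y w T)
    (hs : ∑ i ∈ T, w i < 1) : ∃ j ∉ T, 0 < w j := by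
  obtain ⟨j, hj, hwj⟩ := exists_lt_of_sum_lt (s := Tᶜ) (f := fun _ => (0 : ℝ)) (g := w)
    (by rw [sum_const_zero]; linarith [sum_add_sum_compl T w, h.rep.sum_eq_one])
  exact ⟨j, mem_compl.1 hj, hwj⟩

theorem MaximizesMass.card_eq (h : MaximizesMass A x k y w T) (hs : ∑ i ∈ T, w i < 1) :
    #T = k + 1 := by
  obtain ⟨j, hj, hwj⟩ := h.exists_pos_notMem hs
  by_contra hne
  have := h.sum_le y w h.rep (insert j T) (by
    rw [card_insert_of_notMem hj]; have := h.card_le; omega)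
  rw [sum_insert hj] at this
  linarith

theorem MaximizesMass.pos (h : MaximizesMass A x k y w T) (hs : ∑ i ∈ T, w i < 1) :
    ∀ i ∈ T, 0 < w i := by
  intro i hi
  obtain ⟨j, hj, hwj⟩ := h.exists_pos_notMem hs
  by_contra hwi
  have hj' : j ∉ T.erase i := fun h => hj (mem_of_mem_erase h)
  have := h.sum_le y w h.rep (insert j (T.erase i)) (by
    rw [card_insert_of_notMem hj', card_erase_of_mem hi]; have := h.card_le; omega)
  rw [sum_insert hj', sum_erase T (le_antisymm (not_lt.1 hwi) (h.rep.nonneg i))] at this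
  linarith

/-- Shifting the weights along an affine dependence of the `y i`, `i ∈ T`, keeps the mass
of `T` but makes one weight in `T` vanish. -/
theorem MaximizesMass.linearIndepOn (h : MaximizesMass A x k y w T) (hs : ∑ i ∈ T, w i < 1)
    {i₀ : ι} (hi₀ : i₀ ∈ T) : LinearIndepOn ℝ (fun i => y i - y i₀) ↑(T.erase i₀) := by
  rw [linearIndepOn_iff]
  intro l hl hl0
  by_contra hne
  obtain ⟨c, hcT, hc0, hcy, hcl⟩ := exists_affineRelation_of_mem_supported hi₀ y hl
  have hcT' : ∑ i ∈ T, c i = 0 := by rwa [sum_subset (subset_univ T) fun i _ => hcT i]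
  obtain ⟨i, hi⟩ : ∃ i, l i ≠ 0 := by simpa [Finsupp.ext_iff] using hne
  have hil : i ∈ T.erase i₀ := hl (Finsupp.mem_support_iff.2 hi)
  obtain ⟨t, -, hle, i₁, hi₁, heq⟩ := exists_maximal_pos_mul_le (h.pos hs)
    (exists_pos_of_sum_zero_of_exists_nonzero c hcT'
      ⟨i, mem_of_mem_erase hil, by rwa [hcl i (ne_of_mem_erase hil)]⟩)
  have hrep : IsConvexRep A x y (fun i => w i - t * c i) := by
    refine ⟨h.rep.mem, fun i => ?_, ?_, ?_⟩
    · by_cases hiT : i ∈ T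
      · linarith [hle i hiT]
      · simpa [hcT i hiT] using h.rep.nonneg i
    · simp [sum_sub_distrib, ← mul_sum, hc0, h.rep.sum_eq_one]
    · simp [sub_smul, sum_sub_distrib, mul_smul, ← smul_sum, hcy, hl0, h.rep.sum_smul_eq]
  have hmass : ∑ i ∈ T, (w i - t * c i) = ∑ i ∈ T, w i := by
    simp [sum_sub_distrib, ← mul_sum, hcT']
  have hmax : MaximizesMass A x k y (fun i => w i - t * c i) T :=
    ⟨hrep, h.card_le, by simpa only [hmass] using h.sum_le⟩
  linarith [hmax.pos (hmass ▸ hs) i₁ hi₁]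

/-- Moving weight from the `y i`, `i ∈ T`, onto `z` until some weight `w i₁`, `i₁ ∈ T`, vanishes,
and merging `z` into `y j`, would increase the mass of `insert j (T.erase i₁)`. -/
theorem MaximizesMass.sub_notMem_span (h : MaximizesMass A x k y w T) (hs : ∑ i ∈ T, w i < 1)
    {j : ι} (hA : Convex ℝ (A j)) {z : E} (hz : z ∈ A j) {i₀ : ι} (hi₀ : i₀ ∈ T) :
    z - x ∉ Submodule.span ℝ ((fun i => y i - y i₀) '' ↑(T.erase i₀)) := by
  intro hzx
  obtain ⟨l, hl, hlz⟩ := (Finsupp.mem_span_image_iff_linearCombination ℝ).1 hzx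
  obtain ⟨c, hcT, hc0, hcy, -⟩ := exists_affineRelation_of_mem_supported hi₀ y hl
  have hcT' : ∑ i ∈ T, c i = 0 := by rwa [sum_subset (subset_univ T) fun i _ => hcT i]
  have hpos := h.pos hs
  obtain ⟨i₂, hi₂, hwi₂⟩ : ∃ i ∈ T, w i ≤ w i + c i :=
    exists_le_of_sum_le ⟨i₀, hi₀⟩ (by simp [sum_add_distrib, hcT'])
  obtain ⟨t, ht, hle, i₁, hi₁, heq⟩ := exists_maximal_pos_mul_le (d := fun i => w i + c i) hpos
    ⟨i₂, hi₂, (hpos i₂ hi₂).trans_le hwi₂⟩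
  have ht1 : t ≤ 1 := by nlinarith [hle i₂ hi₂, hpos i₂ hi₂]
  set w' : ι → ℝ := fun i => w i - t * (w i + c i) with hw'
  have hw'0 : ∀ i, 0 ≤ w' i := by
    intro i
    by_cases hiT : i ∈ T
    · linarith [hle i hiT]
    · simp only [hw', hcT i hiT, add_zero]
      nlinarith [h.rep.nonneg i]
  obtain ⟨y'', hrep⟩ := exists_isConvexRep_add_single (x := x) hA h.rep.mem hz hw'0 ht.le
    (by simp [hw', sum_sub_distrib, sum_add_distrib, ← mul_sum, hc0, h.rep.sum_eq_one])
    (by simp [hw', sub_smul, add_smul, sum_sub_distrib, sum_add_distrib, mul_smul, ← smul_sum,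
      smul_sub, hcy, hlz, h.rep.sum_smul_eq])
  have hw'i₁ : w' i₁ = 0 := by simp only [hw', heq, sub_self]
  have hT'card : #(insert j (T.erase i₁)) ≤ k + 1 :=
    (card_insert_le _ _).trans (by rw [card_erase_of_mem hi₁]; have := h.card_le; omega)
  have hmass : ∑ i ∈ T, w' i ≤ ∑ i ∈ insert j (T.erase i₁), w' i := by
    rw [← sum_erase T hw'i₁]
    exact sum_le_sum_of_subset_of_nonneg (subset_insert _ _) fun i _ _ => hw'0 i
  have hgain := h.sum_le _ _ hrep _ hT'card
  rw [Pi.add_def, sum_add_distrib, sum_pi_single', if_pos (mem_insert_self _ _)] at hgain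
  have hw'T : ∑ i ∈ T, w' i = ∑ i ∈ T, w i - t * ∑ i ∈ T, w i := by
    simp [hw', sum_sub_distrib, sum_add_distrib, ← mul_sum, hcT']
  nlinarith

end MaximizesMass

theorem exists_maximizesMass {E ι : Type*} [AddCommGroup E] [Module ℝ E] [TopologicalSpace E]
    [ContinuousAdd E] [ContinuousSMul ℝ E] [T2Space E] [Fintype ι]
    {A : ι → Set E} (hA : ∀ i, Convex ℝ (A i)) (hAc : ∀ i, IsCompact (A i))
    (hAne : ∀ i, (A i).Nonempty) {x : E} (hx : x ∈ convexHull ℝ (⋃ i, A i)) (k : ℕ) :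
    ∃ y w T, MaximizesMass A x k y w T := by
  obtain ⟨y, w, hrep⟩ := exists_isConvexRep_of_mem_convexHull hA hAne hx
  obtain ⟨⟨y, w⟩, hrep, T, hT, hmax⟩ :=
    (isCompact_setOf_isConvexRep (x := x) hAc).exists_forall_le_of_finset ⟨(y, w), hrep⟩
      (s := univ.filter (#· ≤ k + 1)) ⟨∅, by simp⟩ (f := fun T p => ∑ i ∈ T, p.2 i)
      fun T => by fun_prop
  exact ⟨y, w, T, hrep, (mem_filter.1 hT).2, fun y' w' h' T' hT' =>
    hmax (y', w') h' T' (mem_filter.2 ⟨mem_univ _, hT'⟩)⟩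

theorem exists_card_le_mem_convexHull_of_convex_image {E F ι : Type*} [NormedAddCommGroup E]
    [NormedSpace ℝ E] [FiniteDimensional ℝ E] [AddCommGroup F] [Module ℝ F]
    [FiniteDimensional ℝ F] [Fintype ι] {k : ℕ}
    (hF : Module.finrank ℝ F = Module.finrank ℝ E - k) {A : ι → Set E}
    (hA : ∀ i, Convex ℝ (A i)) (hAc : ∀ i, IsCompact (A i)) (hAne : ∀ i, (A i).Nonempty)
    (himg : ∀ f : E →ₗ[ℝ] F, Convex ℝ (f '' ⋃ i, A i)) {x : E}
    (hx : x ∈ convexHull ℝ (⋃ i, A i)) :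
    ∃ T : Finset ι, #T ≤ k + 1 ∧ x ∈ convexHull ℝ (⋃ i ∈ T, A i) := by
  classical
  obtain ⟨y, w, T, h⟩ := exists_maximizesMass hA hAc hAne hx k
  refine ⟨T, h.card_le, ?_⟩
  obtain hs | hs := (h.rep.sum_le_one T).lt_or_eq
  swap
  · exact h.rep.mem_convexHull_of_sum_eq_one hs
  exfalso
  obtain ⟨i₀, hi₀⟩ : T.Nonempty := card_pos.1 (by rw [h.card_eq hs]; omega)
  have hW :
      Module.finrank ℝ (Submodule.span ℝ ((fun i => y i - y i₀) '' ↑(T.erase i₀))) = k := by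
    rw [Set.image_eq_range, finrank_span_eq_card (h.linearIndepOn hs hi₀)]
    simp only [coe_sort_coe, Fintype.card_coe, card_erase_of_mem hi₀, h.card_eq hs,
      Nat.add_sub_cancel]
  obtain ⟨f, hf⟩ := Submodule.exists_linearMap_ker_eq (W := F) _ (hW ▸ hF)
  obtain ⟨z, hz, hzx⟩ : ∃ z ∈ ⋃ i, A i, f z = f x := by
    change f x ∈ f '' ⋃ i, A i
    rw [← (himg f).convexHull_eq, ← LinearMap.image_convexHull]
    exact ⟨x, hx, rfl⟩
  obtain ⟨j, hzj⟩ := Set.mem_iUnion.1 hz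
  exact h.sub_notMem_span hs (hA j) hzj hi₀
    (by rw [← hf, LinearMap.mem_ker, map_sub, hzx, sub_self])

theorem exists_subset_card_le_mem_convexHull_of_convex_image {E F : Type*}
    [NormedAddCommGroup E] [NormedSpace ℝ E] [FiniteDimensional ℝ E] [AddCommGroup F]
    [Module ℝ F] [FiniteDimensional ℝ F] {k : ℕ}
    (hF : Module.finrank ℝ F = Module.finrank ℝ E - k) {G : Finset (Set E)}
    (hcvx : ∀ S ∈ G, Convex ℝ S) (hcpt : ∀ S ∈ G, IsCompact S)
    (himg : ∀ f : E →ₗ[ℝ] F, Convex ℝ (f '' ⋃ S ∈ G, S)) {x : E}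
    (hx : x ∈ convexHull ℝ (⋃ S ∈ G, S)) :
    ∃ H ⊆ G, #H ≤ k + 1 ∧ x ∈ convexHull ℝ (⋃ S ∈ H, S) := by
  classical
  set G' := G.filter Set.Nonempty
  have hG' : ⋃ S : G', (S : Set E) = ⋃ S ∈ G, S := by
    ext z
    simp only [Set.mem_iUnion, Subtype.exists, G', mem_filter]
    exact ⟨fun ⟨S, ⟨hS, _⟩, hz⟩ => ⟨S, hS, hz⟩, fun ⟨S, hS, hz⟩ => ⟨S, ⟨hS, z, hz⟩, hz⟩⟩
  obtain ⟨T, hT, hxT⟩ := exists_card_le_mem_convexHull_of_convex_image hF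
    (A := fun S : G' => (S : Set E)) (fun S => hcvx S (mem_filter.1 S.2).1)
    (fun S => hcpt S (mem_filter.1 S.2).1) (fun S => (mem_filter.1 S.2).2)
    (hG' ▸ himg) (hG' ▸ hx)
  refine ⟨T.map (Function.Embedding.subtype _), fun S hS => ?_, by rwa [card_map], ?_⟩
  · obtain ⟨S', -, rfl⟩ := mem_map.1 hS
    exact (mem_filter.1 S'.2).1
  · refine convexHull_mono (Set.iUnion₂_subset fun S hS => ?_) hxT
    exact Set.subset_biUnion_of_mem (u := id) (mem_map_of_mem _ hS)

theorem caraNumber_le_of_k_convex_general {n k : ℕ}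
    (F : Finset (Set (EuclideanSpace ℝ (Fin n))))
    (hcvx : ∀ S ∈ F, Convex ℝ S) (hcpt : ∀ S ∈ F, IsCompact S)
    (hconv : ∀ G ⊆ F, ∀ f : EuclideanSpace ℝ (Fin n) →ₗ[ℝ] EuclideanSpace ℝ (Fin (n - k)),
      Convex ℝ (f '' ⋃ S ∈ G, S)) :
    caraNumber F ≤ k + 1 := by
  refine Nat.sInf_le fun G hG => Set.Subset.antisymm (fun x hx => ?_) ?_
  · exact exists_subset_card_le_mem_convexHull_of_convex_image (by simp)
      (fun S hS => hcvx S (hG hS)) (fun S hS => hcpt S (hG hS)) (hconv G hG) hx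
  · rintro x ⟨H, hHG, -, hxH⟩
    exact convexHull_mono (Set.biUnion_subset_biUnion_left hHG) hxH

/-- If the union of every subfamily of `F` is `(n-k)`-convex, then the Carathéodory number
of `F` is at most `k+1`. -/
theorem caraNumber_le_of_k_convex {n k : ℕ} (hk : k ≤ n)
    (F : Finset (Set (EuclideanSpace ℝ (Fin n))))
    (hcvx : ∀ S ∈ F, Convex ℝ S) (hcpt : ∀ S ∈ F, IsCompact S)
    (hconv : ∀ G ⊆ F, ∀ f : EuclideanSpace ℝ (Fin n) →ₗ[ℝ] EuclideanSpace ℝ (Fin (n - k)),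
      Convex ℝ (f '' ⋃ S ∈ G, S)) :
    caraNumber F ≤ k + 1 :=
  caraNumber_le_of_k_convex_general F hcvx hcpt hconv
end

section
/- Let S = {s₁, …, s_r} ⊂ ℝ^{r−1} be the vertex set of a regular simplex centered at the origin, let c₁, …, c_m ∈ ℝ^{n+1}, and for each i let x_i = s_{σ(i)} ⊗ c_i ∈ ℝ^{r−1} ⊗ ℝ^{n+1} for some assignment σ : {1,…,m} → {1,…,r}. Set P_j = σ⁻¹(j). Then 0 ∈ conv{x₁, …, x_m} if and only if ⋂_{j=1}^r conv{c_i : i ∈ P_j} ≠ ∅, where each c_i lies in the affine hyperplane x_{n+1} = 1 of ℝ^{n+1}. -/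
open Finset

/-!
Write `P_j = σ⁻¹(j)`. Grouping the points by parts, a convex combination satisfies
`∑ᵢ wᵢ xᵢ = ∑ⱼ sⱼ ⊗ vⱼ` with `vⱼ = ∑_{i ∈ P_j} wᵢ cᵢ`. The vertices of a regular simplex centered
at the origin satisfy no linear relation other than multiples of `∑ⱼ sⱼ = 0` (their Gram matrix is
`a I + b J` with `a ≠ 0` and the relation is read off by pairing with each `sₖ`), so this tensor
vanishes exactly when all `vⱼ` are equal. Since every `cᵢ` has last coordinate `1`, equal `vⱼ` have
equal total weights `∑_{i ∈ P_j} wᵢ = 1/r`, and `r • vⱼ` is then a common point of the hulls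
`conv (c '' P_j)`. Conversely, barycentric weights of a common point in each part, divided by `r`,
give such a `w`.
-/

section RegularSimplex

variable {E κ : Type*} [NormedAddCommGroup E] [InnerProductSpace ℝ E] [Fintype κ]
  {s : κ → E} {d : ℝ}

lemma norm_eq_of_sum_eq_zero_of_dist_eq (hsum : ∑ j, s j = 0)
    (hdist : ∀ j k, j ≠ k → dist (s j) (s k) = d) (j k : κ) : ‖s j‖ = ‖s k‖ := by
  classical
  -- evaluate `∑ j, ‖s j - s k‖ ^ 2` through the distances and by expanding with `∑ j, s j = 0`
  have key : ∀ k, Fintype.card κ * ‖s k‖ ^ 2 = (Fintype.card κ - 1) * d ^ 2 - ∑ j, ‖s j‖ ^ 2 := by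
    intro k
    have hdist_sq : ∀ j, ‖s j - s k‖ ^ 2 = d ^ 2 - if j = k then d ^ 2 else 0 := by
      intro j
      split_ifs with h
      · simp [h]
      · rw [← dist_eq_norm, hdist j k h, sub_zero]
    have hexpand := sum_congr rfl fun j (_ : j ∈ univ) => norm_sub_sq_real (s j) (s k)
    simp only [hdist_sq, sum_add_distrib, sum_sub_distrib, ← mul_sum, ← sum_inner, hsum,
      inner_zero_left, mul_zero, sum_ite_eq', mem_univ, if_true, sum_const, card_univ,
      nsmul_eq_mul] at hexpand
    linarith
  have hcard : (0 : ℝ) < Fintype.card κ := by exact_mod_cast Fintype.card_pos_iff.2 ⟨j⟩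
  have hsq : ‖s j‖ ^ 2 = ‖s k‖ ^ 2 := mul_left_cancel₀ hcard.ne' ((key j).trans (key k).symm)
  exact (pow_left_inj₀ (norm_nonneg _) (norm_nonneg _) two_ne_zero).1 hsq

lemma eq_of_sum_smul_eq_zero_of_dist_eq (hsum : ∑ j, s j = 0)
    (hdist : ∀ j k, j ≠ k → dist (s j) (s k) = d) (hd : d ≠ 0) {a : κ → ℝ}
    (ha : ∑ j, a j • s j = 0) (j k : κ) : a j = a k := by
  classical
  have hinner : ∀ i l,
      inner ℝ (s i) (s l) = ‖s j‖ ^ 2 - d ^ 2 / 2 + if l = i then d ^ 2 / 2 else 0 := by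
    intro i l
    rw [norm_eq_of_sum_eq_zero_of_dist_eq hsum hdist j l]
    split_ifs with h
    · rw [h, real_inner_self_eq_norm_sq]
      ring
    · have := norm_sub_sq_real (s i) (s l)
      rw [← dist_eq_norm, hdist i l (Ne.symm h), norm_eq_of_sum_eq_zero_of_dist_eq hsum hdist i l]
        at this
      linarith
  have hrel : ∀ l, (‖s j‖ ^ 2 - d ^ 2 / 2) * ∑ i, a i + d ^ 2 / 2 * a l = 0 := by
    intro l
    have := congrArg (fun v => inner ℝ v (s l)) ha
    simp only [sum_inner, real_inner_smul_left, hinner, inner_zero_left, mul_add, mul_ite,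
      mul_zero, sum_add_distrib, sum_ite_eq, mem_univ, if_true] at this
    rw [← this, ← sum_mul]
    ring
  have hd2 : d ^ 2 / 2 ≠ 0 := by positivity
  exact mul_left_cancel₀ hd2 (by linarith [hrel j, hrel k])

end RegularSimplex

lemma sum_fiber_subst {ι κ M : Type*} [AddCommMonoid M] [DecidableEq κ] (s : Finset ι)
    (σ : ι → κ) (f : κ → ι → M) (j : κ) :
    ∑ i ∈ s with σ i = j, f (σ i) i = ∑ i ∈ s with σ i = j, f j i :=
  sum_congr rfl fun i hi => by rw [(mem_filter.1 hi).2]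

section Tensor

variable {α β ι κ : Type*}

def outerProd : (α → ℝ) →ₗ[ℝ] (β → ℝ) →ₗ[ℝ] (α × β → ℝ) :=
  LinearMap.mk₂ ℝ (fun u v q => u q.1 * v q.2)
    (fun _ _ _ => funext fun _ => add_mul _ _ _) (fun _ _ _ => funext fun _ => mul_assoc _ _ _)
    (fun _ _ _ => funext fun _ => mul_add _ _ _) (fun _ _ _ => funext fun _ => mul_left_comm _ _ _)

@[simp]
lemma outerProd_apply (u : α → ℝ) (v : β → ℝ) (q : α × β) : outerProd u v q = u q.1 * v q.2 :=
  rfl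

lemma sum_smul_outerProd_comp [Fintype ι] [Fintype κ] [DecidableEq κ] (w : ι → ℝ)
    (u : κ → α → ℝ) (σ : ι → κ) (c : ι → β → ℝ) :
    ∑ i, w i • outerProd (u (σ i)) (c i) = ∑ j, outerProd (u j) (∑ i with σ i = j, w i • c i) := by
  simp_rw [map_sum, ← map_smul]
  rw [← sum_fiberwise univ σ]
  exact sum_congr rfl fun j _ => sum_fiber_subst _ σ (fun j i => outerProd (u j) (w i • c i)) j

lemma sum_outerProd_eq_zero_iff [Fintype κ] {u : κ → α → ℝ} (hsum : ∑ j, u j = 0)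
    (hrel : ∀ a : κ → ℝ, ∑ j, a j • u j = 0 → ∀ j k, a j = a k) (v : κ → β → ℝ) :
    ∑ j, outerProd (u j) (v j) = 0 ↔ ∀ j k, v j = v k := by
  constructor
  · intro h j k
    funext q
    refine hrel (fun l => v l q) ?_ j k
    funext p
    simpa [Finset.sum_apply, mul_comm] using congrFun h (p, q)
  · intro h
    rcases isEmpty_or_nonempty κ with _ | ⟨⟨j₀⟩⟩
    · simp
    · simp_rw [h _ j₀, ← LinearMap.sum_apply, ← map_sum, hsum, map_zero, LinearMap.zero_apply]

end Tensor

section ConvexHull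

variable {ι κ E : Type*} [AddCommGroup E] [Module ℝ E]

lemma mem_convexHull_image_iff (t : Finset ι) (c : ι → E) (z : E) :
    z ∈ convexHull ℝ (c '' t) ↔
      ∃ w : ι → ℝ, (∀ i ∈ t, 0 ≤ w i) ∧ ∑ i ∈ t, w i = 1 ∧ ∑ i ∈ t, w i • c i = z := by
  classical
  constructor
  · rw [mem_convexHull_iff_exists_fintype]
    rintro ⟨τ, _, w, g, hw₀, hw₁, hg, rfl⟩
    choose f hft hf using hg
    have hmaps : ∀ k ∈ (univ : Finset τ), f k ∈ t := fun k _ => hft k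
    refine ⟨fun i => ∑ k with f k = i, w k, fun i _ => sum_nonneg fun k _ => hw₀ k, ?_, ?_⟩
    · rw [sum_fiberwise_of_maps_to hmaps, hw₁]
    · rw [← sum_fiberwise_of_maps_to hmaps]
      refine sum_congr rfl fun i _ => ?_
      rw [sum_smul]
      refine sum_congr rfl fun k hk => ?_
      rw [← hf k, (mem_filter.1 hk).2]
  · rintro ⟨w, hw₀, hw₁, rfl⟩
    rw [← centerMass_eq_of_sum_1 _ _ hw₁]
    exact t.centerMass_mem_convexHull hw₀ (hw₁ ▸ one_pos) fun i hi => Set.mem_image_of_mem c hi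

lemma iInter_convexHull_image_fiber_nonempty_iff [Fintype ι] [Fintype κ] [Nonempty κ]
    [DecidableEq κ] (σ : ι → κ) (c : ι → E) (ℓ : E →ₗ[ℝ] ℝ) (hℓ : ∀ i, ℓ (c i) = 1) :
    (⋂ j, convexHull ℝ (c '' {i | σ i = j})).Nonempty ↔
      ∃ w : ι → ℝ, (∀ i, 0 ≤ w i) ∧ ∑ i, w i = 1 ∧
        ∀ j k, ∑ i with σ i = j, w i • c i = ∑ i with σ i = k, w i • c i := by
  simp_rw [← coe_filter_univ, Set.Nonempty, Set.mem_iInter, mem_convexHull_image_iff]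
  constructor
  · rintro ⟨z, hz⟩
    choose w hw₀ hw₁ hwz using hz
    set r : ℝ := (Fintype.card κ : ℝ)
    have hr : r ≠ 0 := Nat.cast_ne_zero.2 Fintype.card_ne_zero
    have hpart : ∀ j, ∑ i with σ i = j, (w (σ i) i / r) • c i = r⁻¹ • z := fun j => by
      rw [sum_fiber_subst _ σ (fun j i => (w j i / r) • c i)]
      simp_rw [div_eq_inv_mul, mul_smul, ← smul_sum, hwz]
    refine ⟨fun i => w (σ i) i / r, fun i => div_nonneg (hw₀ _ _ (by simp)) (Nat.cast_nonneg _),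
      ?_, fun j k => by rw [hpart, hpart]⟩
    rw [← sum_fiberwise univ σ]
    simp_rw [sum_fiber_subst _ σ (fun j i => w j i / r), ← sum_div, hw₁]
    rw [sum_const, card_univ, nsmul_eq_mul, mul_one, div_self hr]
  · rintro ⟨w, hw₀, hw₁, hv⟩
    obtain ⟨j₀⟩ := ‹Nonempty κ›
    set W := ∑ i with σ i = j₀, w i
    have hWj : ∀ j, ∑ i with σ i = j, w i = W := fun j => by
      simpa [hℓ] using congrArg ℓ (hv j j₀)
    have hrW : (Fintype.card κ : ℝ) * W = 1 := by
      rw [← hw₁, ← sum_fiberwise univ σ, sum_congr rfl fun j _ => hWj j, sum_const, card_univ,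
        nsmul_eq_mul]
    have hW : 0 < W := pos_of_mul_pos_right (hrW ▸ one_pos) (Nat.cast_nonneg _)
    refine ⟨W⁻¹ • ∑ i with σ i = j₀, w i • c i, fun j => ⟨fun i => W⁻¹ * w i,
      fun i _ => mul_nonneg (inv_nonneg.2 hW.le) (hw₀ i), ?_, ?_⟩⟩
    · rw [← mul_sum, hWj j, inv_mul_cancel₀ hW.ne']
    · simp_rw [mul_smul, ← smul_sum, hv j j₀]

end ConvexHull

/-- Sarkaria's tensor trick: with `s` the vertices of a regular simplex in `ℝ^{r-1}`
centered at the origin, points `c i` at height `1` in `ℝ^{n+1}`, and `x i = s (σ i) ⊗ c i`,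
the origin lies in `conv {x 1, …, x m}` iff the convex hulls of the parts
`{c i : σ i = j}` have a common point. -/
theorem sarkaria {n r m : ℕ} (hr : 1 ≤ r)
    (s : Fin r → EuclideanSpace ℝ (Fin (r - 1)))
    (hsum : ∑ j, s j = 0)
    (hreg : ∃ d : ℝ, 0 < d ∧ ∀ j j', j ≠ j' → dist (s j) (s j') = d)
    (c : Fin m → (Fin (n + 1) → ℝ))
    (hc : ∀ i, c i (Fin.last n) = 1)
    (σ : Fin m → Fin r)
    (x : Fin m → (Fin (r - 1) × Fin (n + 1) → ℝ))
    (hx : ∀ i, x i = fun q => s (σ i) q.1 * c i q.2) :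
    (0 : Fin (r - 1) × Fin (n + 1) → ℝ) ∈ convexHull ℝ (Set.range x) ↔
      (⋂ j, convexHull ℝ (c '' {i | σ i = j})).Nonempty := by
  obtain ⟨d, hd, hdist⟩ := hreg
  have : Nonempty (Fin r) := ⟨⟨0, hr⟩⟩
  have hsum' : ∑ j, (s j).ofLp = 0 := by rw [← WithLp.ofLp_sum, hsum, WithLp.ofLp_zero]
  have hrel : ∀ a : Fin r → ℝ, ∑ j, a j • (s j).ofLp = 0 → ∀ j k, a j = a k := fun a ha =>
    eq_of_sum_smul_eq_zero_of_dist_eq hsum hdist hd.ne'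
      (WithLp.ofLp_injective 2 (by simpa [WithLp.ofLp_sum] using ha))
  obtain rfl : x = fun i => outerProd (s (σ i)).ofLp (c i) := funext hx
  rw [iInter_convexHull_image_fiber_nonempty_iff σ c (LinearMap.proj (Fin.last n)) hc,
    ← Set.image_univ, ← coe_univ, mem_convexHull_image_iff]
  simp only [mem_univ, forall_const, sum_smul_outerProd_comp (u := fun j => (s j).ofLp),
    sum_outerProd_eq_zero_iff hsum' hrel]
end

section
/- If X ⊆ ℝⁿ is compact and (n−k)-convex, L is an affine k-plane with L ∩ X = ∅ and p ∈ L, then p ∉ conv X. -/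
open Finset

/-- Separation step: if `X ⊆ ℝⁿ` is compact and `(n-k)`-convex, and `L` is an affine
`k`-plane disjoint from `X` containing `p`, then `p ∉ conv X`. -/
theorem not_mem_convexHull_of_k_flat {n k : ℕ} (hk : k ≤ n)
    (X : Set (EuclideanSpace ℝ (Fin n))) (hX : IsCompact X)
    (hconv : ∀ f : EuclideanSpace ℝ (Fin n) →ₗ[ℝ] EuclideanSpace ℝ (Fin (n - k)),
      Convex ℝ (f '' X))
    (L : AffineSubspace ℝ (EuclideanSpace ℝ (Fin n)))
    (hdim : Module.finrank ℝ L.direction = k)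
    (hdisj : (L : Set (EuclideanSpace ℝ (Fin n))) ∩ X = ∅)
    (p : EuclideanSpace ℝ (Fin n)) (hp : p ∈ L) :
    p ∉ convexHull ℝ X := by
  set D := L.direction
  have hfr : Module.finrank ℝ (Dᗮ : Submodule ℝ (EuclideanSpace ℝ (Fin n))) = n - k := by
    have h := Submodule.finrank_add_finrank_orthogonal (K := D)
    rw [hdim] at h
    have : Module.finrank ℝ (EuclideanSpace ℝ (Fin n)) = n := by simp
    omega
  have hfr2 : Module.finrank ℝ (EuclideanSpace ℝ (Fin (n - k))) = n - k := by simp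
  let e : (Dᗮ : Submodule ℝ (EuclideanSpace ℝ (Fin n))) ≃ₗ[ℝ] EuclideanSpace ℝ (Fin (n - k)) :=
    LinearEquiv.ofFinrankEq _ _ (hfr.trans hfr2.symm)
  let f : EuclideanSpace ℝ (Fin n) →ₗ[ℝ] EuclideanSpace ℝ (Fin (n - k)) :=
    (e : (Dᗮ : Submodule ℝ (EuclideanSpace ℝ (Fin n))) →ₗ[ℝ] _) ∘ₗ
      (Submodule.orthogonalProjectionOnto Dᗮ : EuclideanSpace ℝ (Fin n) →ₗ[ℝ] _)
  have hker : ∀ v, f v = 0 ↔ v ∈ D := by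
    intro v
    simp only [f, LinearMap.comp_apply, LinearEquiv.coe_coe, ContinuousLinearMap.coe_coe]
    rw [e.map_eq_zero_iff, Submodule.orthogonalProjectionOnto_eq_zero_iff, Submodule.orthogonal_orthogonal]
  intro hcon
  have hfp : f p ∈ f '' X := by
    have h1 : f '' (convexHull ℝ X) ⊆ convexHull ℝ (f '' X) :=
      (LinearMap.image_convexHull f X).le
    have h2 : convexHull ℝ (f '' X) = f '' X := (hconv f).convexHull_eq
    exact h2 ▸ h1 ⟨p, hcon, rfl⟩
  obtain ⟨x, hxX, hfx⟩ := hfp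
  have hxD : x - p ∈ D := by
    rw [← hker]
    simp [map_sub, hfx]
  have hxL : x ∈ L := by
    have := AffineSubspace.vadd_mem_of_mem_direction hxD hp
    simpa [vadd_eq_add, sub_add_cancel] using this
  exact Set.eq_empty_iff_forall_notMem.mp hdisj x ⟨hxL, hxX⟩
end
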